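/- Let 0 < c < 1/3, K = (1-c^2)/c^2, ψ = arcsin(√(1-c^2))/√K, 0 < r ≤ π/(4√K) - ψ/2, Δ = √K(2r+ψ), and fix s > 0. Define u(t) = (s/√K)·sin(√K·(t/s - 1 + ψ)) for t ∈ [s, (1+2r)s]. Then on this interval u(t) > 0, cos Δ ≤ u'(t) ≤ c, and -u''(t)/u(t) = K/s². -/

import Mathlib

/-!
With the phase `θ(t) = √K (t/s - 1 + ψ)` one has `u' = cos θ` and `u'' = -(√K/s) sin θ`, so
`-u''/u = K/s²` wherever `sin θ ≠ 0`. For `t ∈ [s, (1+2r)s]` the phase lies in `[√K ψ, Δ]`, and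
`0 < √K ψ ≤ Δ ≤ π/2`; there `sin θ > 0` and `cos` decreases from `cos (√K ψ) = c` to `cos Δ`.
-/

open Real Set

noncomputable def sinWarp (a s ψ t : ℝ) : ℝ := s / a * sin (a * (t / s - 1 + ψ))

section SinWarp

variable {a s ψ : ℝ}

theorem hasDerivAt_mul_div_sub_one_add (t : ℝ) :
    HasDerivAt (fun t => a * (t / s - 1 + ψ)) (a / s) t := by
  simpa [div_eq_mul_inv] using
    ((((hasDerivAt_id t).div_const s).sub_const 1).add_const ψ).const_mul a

theorem hasDerivAt_sinWarp (ha : a ≠ 0) (hs : s ≠ 0) (t : ℝ) :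
    HasDerivAt (sinWarp a s ψ) (cos (a * (t / s - 1 + ψ))) t :=
  ((hasDerivAt_mul_div_sub_one_add t).sin.const_mul (s / a)).congr_deriv (by field_simp)

theorem deriv_sinWarp (ha : a ≠ 0) (hs : s ≠ 0) :
    deriv (sinWarp a s ψ) = fun t => cos (a * (t / s - 1 + ψ)) :=
  funext fun t => (hasDerivAt_sinWarp ha hs t).deriv

theorem deriv_deriv_sinWarp (ha : a ≠ 0) (hs : s ≠ 0) (t : ℝ) :
    deriv (deriv (sinWarp a s ψ)) t = -(a / s) * sin (a * (t / s - 1 + ψ)) := by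
  rw [deriv_sinWarp ha hs, (hasDerivAt_mul_div_sub_one_add t).cos.deriv]
  ring

theorem neg_deriv_deriv_sinWarp_div (ha : a ≠ 0) (hs : s ≠ 0) {t : ℝ}
    (hsin : sin (a * (t / s - 1 + ψ)) ≠ 0) :
    -deriv (deriv (sinWarp a s ψ)) t / sinWarp a s ψ t = a ^ 2 / s ^ 2 := by
  rw [deriv_deriv_sinWarp ha hs, sinWarp]
  generalize sin (a * (t / s - 1 + ψ)) = y at hsin ⊢
  field_simp

theorem mul_div_sub_one_add_mem_Icc {r t : ℝ} (ha : 0 ≤ a) (hs : 0 < s)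
    (ht : t ∈ Icc s ((1 + 2 * r) * s)) :
    a * (t / s - 1 + ψ) ∈ Icc (a * ψ) (a * (2 * r + ψ)) := by
  have h1 : 1 ≤ t / s := (one_le_div hs).2 ht.1
  have h2 : t / s ≤ 1 + 2 * r := (div_le_iff₀ hs).2 ht.2
  constructor <;> nlinarith

end SinWarp

theorem cos_arcsin_sqrt_one_sub_sq {c : ℝ} (hc₀ : 0 ≤ c) (hc₁ : c ≤ 1) :
    cos (arcsin √(1 - c ^ 2)) = c := by
  rw [cos_arcsin, sq_sqrt (by nlinarith), sub_sub_cancel, sqrt_sq hc₀]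

theorem statement_4_general (c K ψ r Δ s : ℝ) (u : ℝ → ℝ)
    (hc : 0 < c) (hc' : c < 1/3)
    (hK : K = (1 - c^2) / c^2)
    (hψ : ψ = Real.arcsin (Real.sqrt (1 - c^2)) / Real.sqrt K)
    (hr' : r ≤ π / (4 * Real.sqrt K) - ψ / 2)
    (hΔ : Δ = Real.sqrt K * (2*r + ψ))
    (hs : 0 < s)
    (hu : u = fun t => (s / Real.sqrt K) * Real.sin (Real.sqrt K * (t/s - 1 + ψ))) :
    ∀ t ∈ Set.Icc s ((1 + 2*r) * s),
      0 < u t ∧ Real.cos Δ ≤ deriv u t ∧ deriv u t ≤ c ∧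
      -(deriv (deriv u) t) / u t = K / s^2 := by
  intro t ht
  have hK_pos : 0 < K := hK ▸ div_pos (by nlinarith) (by positivity)
  have ha : 0 < √K := sqrt_pos.2 hK_pos
  have hα : √K * ψ = arcsin √(1 - c ^ 2) := by rw [hψ]; field_simp
  have hα_pos : 0 < √K * ψ := hα ▸ arcsin_pos.2 (sqrt_pos.2 (by nlinarith))
  have hcos_α : cos (√K * ψ) = c := hα ▸ cos_arcsin_sqrt_one_sub_sq hc.le (by linarith)
  have hΔ_le : Δ ≤ π / 2 := by
    have := mul_le_mul_of_nonneg_left hr' (by positivity : (0 : ℝ) ≤ 2 * √K)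
    rw [hΔ]
    field_simp at this
    linarith
  obtain ⟨hθ_lo, hθ_hi⟩ := mul_div_sub_one_add_mem_Icc (ψ := ψ) ha.le hs ht
  rw [← hΔ] at hθ_hi
  set θ := √K * (t / s - 1 + ψ)
  have hsin : 0 < sin θ := sin_pos_of_pos_of_lt_pi (by linarith) (by linarith [pi_pos])
  have hu' : u = sinWarp (√K) s ψ := hu
  rw [hu', neg_deriv_deriv_sinWarp_div ha.ne' hs.ne' hsin.ne', sq_sqrt hK_pos.le,
    deriv_sinWarp ha.ne' hs.ne']
  refine ⟨mul_pos (div_pos hs ha) hsin, ?_, hcos_α ▸ ?_, rfl⟩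
  · exact cos_le_cos_of_nonneg_of_le_pi (by linarith) (by linarith [pi_pos]) hθ_hi
  · exact cos_le_cos_of_nonneg_of_le_pi hα_pos.le (by linarith [pi_pos]) hθ_lo

/-- for `s > 0` and `u(t) = (s/√K)·sin(√K·(t/s - 1 + ψ))` on `[s,(1+2r)s]`,
one has `u > 0`, `cos Δ ≤ u' ≤ c`, and `-u''/u = K/s²` on this interval. -/
theorem statement_4 (c K ψ r Δ s : ℝ) (u : ℝ → ℝ)
    (hc : 0 < c) (hc' : c < 1/3)
    (hK : K = (1 - c^2) / c^2)
    (hψ : ψ = Real.arcsin (Real.sqrt (1 - c^2)) / Real.sqrt K)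
    (hr : 0 < r) (hr' : r ≤ π / (4 * Real.sqrt K) - ψ / 2)
    (hΔ : Δ = Real.sqrt K * (2*r + ψ))
    (hs : 0 < s)
    (hu : u = fun t => (s / Real.sqrt K) * Real.sin (Real.sqrt K * (t/s - 1 + ψ))) :
    ∀ t ∈ Set.Icc s ((1 + 2*r) * s),
      0 < u t ∧ Real.cos Δ ≤ deriv u t ∧ deriv u t ≤ c ∧
      -(deriv (deriv u) t) / u t = K / s^2 :=
  statement_4_general c K ψ r Δ s u hc hc' hK hψ hr' hΔ hs hu
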